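/- arXiv:1303.0501 — 4 statements merged into one kernel-verified Lean document; each statement's English description precedes it below -/
import Mathlib

section
/- Let w be analytic on the open unit disc U with w(0) = 0, and let z₀ ∈ U with w(z₀) ≠ 0 be such that |w| attains its maximum value on the closed disc {z : |z| ≤ |z₀|} at the point z₀ (i.e. |w(z)| ≤ |w(z₀)| for all z with |z| ≤ |z₀|). Then z₀·w'(z₀) = k·w(z₀) for some real number k ≥ 1. -/
open Complex Metric Filter Set
open scoped Topology ComplexConjugate

private lemma hasDerivAt_normSq_comp {u : ℝ → ℂ} {u' : ℂ} {t : ℝ}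
    (h : HasDerivAt u u' t) :
    HasDerivAt (fun s => Complex.normSq (u s)) (2 * ((starRingEnd ℂ) (u t) * u').re) t := by
  have hc : HasDerivAt (fun s => (starRingEnd ℂ) (u s) * u s)
      ((starRingEnd ℂ) u' * u t + (starRingEnd ℂ) (u t) * u') t := h.star.mul h
  have hre := (Complex.reCLM.hasFDerivAt.comp_hasDerivAt t hc)
  have hval : Complex.reCLM ((starRingEnd ℂ) u' * u t + (starRingEnd ℂ) (u t) * u')
      = 2 * ((starRingEnd ℂ) (u t) * u').re := by
    have h2 : (starRingEnd ℂ) u' * u t = (starRingEnd ℂ) ((starRingEnd ℂ) (u t) * u') := by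
      simp [mul_comm]
    simp only [map_add, Complex.reCLM_apply, h2, Complex.conj_re]
    ring
  rw [hval] at hre
  exact hre.congr_of_eventuallyEq (Filter.Eventually.of_forall fun s => by
    simp [Function.comp, Complex.normSq_apply, Complex.mul_re, Complex.conj_re,
      Complex.conj_im])

/-- Jack's lemma: if `w` is analytic on the open unit disc with `w 0 = 0`, and `|w|`
attains its maximum on the closed disc `{z : |z| ≤ |z₀|}` at a point `z₀` of the unit
disc with `w z₀ ≠ 0`, then `z₀ * w' z₀ = k * w z₀` for some real `k ≥ 1`. -/
theorem jack_lemma (w : ℂ → ℂ)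
    (hw : DifferentiableOn ℂ w {z : ℂ | ‖z‖ < 1})
    (hw0 : w 0 = 0)
    (z₀ : ℂ) (hz₀ : ‖z₀‖ < 1) (hwz₀ : w z₀ ≠ 0)
    (hmax : ∀ z : ℂ, ‖z‖ ≤ ‖z₀‖ → ‖w z‖ ≤ ‖w z₀‖) :
    ∃ k : ℝ, 1 ≤ k ∧ z₀ * deriv w z₀ = (k : ℂ) * w z₀ := by
  have hz0ne : z₀ ≠ 0 := by rintro rfl; exact hwz₀ hw0
  have hrpos : 0 < ‖z₀‖ := norm_pos_iff.mpr hz0ne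
  set R : ℝ := 1 / ‖z₀‖ with hRdef
  have hR1 : 1 < R := by rw [hRdef, lt_div_iff₀ hrpos, one_mul]; exact hz₀
  have hRpos : 0 < R := lt_trans one_pos hR1
  set f : ℂ → ℂ := fun z => w (z * z₀) with hfdef
  have hopen : IsOpen {z : ℂ | ‖z‖ < 1} := isOpen_lt continuous_norm continuous_const
  -- f is differentiable on ball 0 R
  have hfd : DifferentiableOn ℂ f (ball (0:ℂ) R) := by
    apply hw.comp ((differentiable_id.mul_const z₀).differentiableOn)
    intro z hz
    have hz' : ‖z‖ < R := by simpa [mem_ball_zero_iff] using hz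
    have : ‖z * z₀‖ < 1 := by
      rw [norm_mul]
      calc ‖z‖ * ‖z₀‖ < R * ‖z₀‖ := by gcongr
        _ = 1 := by rw [hRdef]; exact one_div_mul_cancel hrpos.ne'
    exact this
  have hf0 : f 0 = 0 := by simp [hfdef, hw0]
  set g : ℂ → ℂ := dslope f 0 with hgdef
  have hgd : DifferentiableOn ℂ g (ball (0:ℂ) R) :=
    (Complex.differentiableOn_dslope (ball_mem_nhds _ hRpos)).mpr hfd
  -- g equals f z / z away from 0
  have hgeq : ∀ z : ℂ, z ≠ 0 → g z = f z / z := by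
    intro z hz
    rw [hgdef, dslope_of_ne _ hz, slope_def_field, hf0]
    simp [div_eq_div_iff]
  -- max modulus bound on the closed unit ball
  have hgbound : ∀ z ∈ closedBall (0:ℂ) 1, ‖g z‖ ≤ ‖w z₀‖ := by
    intro z hz
    have hcl : closure (ball (0:ℂ) 1) = closedBall 0 1 := closure_ball 0 one_ne_zero
    refine Complex.norm_le_of_forall_mem_frontier_norm_le isBounded_ball ?_ ?_ (by rw [hcl]; exact hz)
    · apply DifferentiableOn.diffContOnCl
      apply hgd.mono
      rw [hcl]
      exact closedBall_subset_ball hR1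
    · intro z hz
      rw [frontier_ball 0 one_ne_zero, mem_sphere_zero_iff_norm] at hz
      have hzne : z ≠ 0 := by intro h; rw [h] at hz; simp at hz
      rw [hgeq z hzne, norm_div, hz, div_one]
      apply hmax
      rw [norm_mul, hz, one_mul]
  have hg1 : g 1 = w z₀ := by rw [hgeq 1 one_ne_zero]; simp [hfdef]
  -- derivative of w at z₀
  have hwz : DifferentiableAt ℂ w z₀ := hw.differentiableAt (hopen.mem_nhds hz₀)
  -- derivative of f at 1
  have hf1 : HasDerivAt f (deriv w z₀ * z₀) 1 := by
    have h1 : HasDerivAt (fun z : ℂ => z * z₀) z₀ 1 := by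
      simpa using (hasDerivAt_id (1:ℂ)).mul_const z₀
    have hpt : HasDerivAt w (deriv w z₀) ((fun z : ℂ => z * z₀) 1) := by
      simpa using hwz.hasDerivAt
    have := HasDerivAt.comp (1:ℂ) hpt h1
    exact this
  -- derivative of g at 1
  set b : ℂ := deriv w z₀ * z₀ - w z₀ with hbdef
  have hgb : HasDerivAt g b 1 := by
    have hdiv : HasDerivAt (fun z => f z / z) ((deriv w z₀ * z₀ * 1 - f 1 * 1) / 1 ^ 2) 1 :=
      hf1.div (hasDerivAt_id 1) one_ne_zero
    have hev : (fun z => f z / z) =ᶠ[𝓝 (1:ℂ)] g := by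
      filter_upwards [isOpen_compl_singleton.mem_nhds
        (by simp : (1:ℂ) ∈ ({0}ᶜ : Set ℂ))] with z hz
      exact (hgeq z hz).symm
    have := hdiv.congr_of_eventuallyEq hev.symm
    have hfval : f 1 = w z₀ := by simp [hfdef]
    simpa [hfval, hbdef] using this
  set a : ℂ := w z₀ with hadef
  -- tangential: Im (conj a * b) = 0
  have him : ((starRingEnd ℂ) a * b).im = 0 := by
    have hcurve : HasDerivAt (fun θ : ℝ => Complex.exp (↑θ * Complex.I)) Complex.I 0 := by
      have he : HasDerivAt (fun z : ℂ => Complex.exp (z * Complex.I)) Complex.I 0 := by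
        have h1 : HasDerivAt (fun z : ℂ => z * Complex.I) Complex.I 0 := by
          simpa using (hasDerivAt_id (0:ℂ)).mul_const Complex.I
        have hpt : HasDerivAt Complex.exp (Complex.exp ((fun z : ℂ => z * Complex.I) 0))
            ((fun z : ℂ => z * Complex.I) 0) := by
          simpa using Complex.hasDerivAt_exp ((0:ℂ) * Complex.I)
        have := HasDerivAt.comp (0:ℂ) hpt h1
        simpa [Function.comp_def] using this
      simpa using he.comp_ofReal
    have hgc : HasDerivAt (fun θ : ℝ => g (Complex.exp (↑θ * Complex.I)))
        (Complex.I • b) 0 := by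
      apply HasDerivAt.scomp_of_eq 0 hgb hcurve
      simp
    have hφ := hasDerivAt_normSq_comp hgc
    have hmaxφ : IsLocalMax (fun θ : ℝ => Complex.normSq (g (Complex.exp (↑θ * Complex.I)))) 0 := by
      apply Filter.Eventually.of_forall
      intro θ
      have h1 : ‖g (Complex.exp (↑θ * Complex.I))‖ ≤ ‖w z₀‖ := by
        apply hgbound
        simp [mem_closedBall_zero_iff, Complex.norm_exp_ofReal_mul_I]
      have h2 : Complex.normSq (g (Complex.exp (↑θ * Complex.I)))
          ≤ Complex.normSq (w z₀) := by
        rw [Complex.normSq_eq_norm_sq, Complex.normSq_eq_norm_sq]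
        exact pow_le_pow_left₀ (norm_nonneg _) h1 2
      simpa [hg1] using h2
    have hz := hmaxφ.hasDerivAt_eq_zero hφ
    have hE : Complex.exp ((↑(0:ℝ)) * Complex.I) = 1 := by simp
    rw [hE, hg1] at hz
    -- hz : 2 * ((conj a) * (I • b)).re = 0
    have : ((starRingEnd ℂ) a * (Complex.I * b)).re = 0 := by
      rw [smul_eq_mul] at hz
      linarith
    -- (conj a * (I * b)).re = -(conj a * b).im
    have hrw : ((starRingEnd ℂ) a * (Complex.I * b)).re = -((starRingEnd ℂ) a * b).im := by
      rw [show (starRingEnd ℂ) a * (Complex.I * b) = Complex.I * ((starRingEnd ℂ) a * b) by ring]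
      simp [Complex.mul_re, Complex.I_re, Complex.I_im]
    rw [hrw] at this
    linarith
  -- radial: 0 ≤ Re (conj a * b)
  have hre : 0 ≤ ((starRingEnd ℂ) a * b).re := by
    have hcurve : HasDerivAt (fun t : ℝ => (t : ℂ)) 1 1 := by
      simpa using (hasDerivAt_id (1:ℂ)).comp_ofReal
    have hgc : HasDerivAt (fun t : ℝ => g ((t : ℂ))) ((1:ℂ) • b) 1 := by
      apply HasDerivAt.scomp_of_eq 1 hgb hcurve
      simp
    have hρ := hasDerivAt_normSq_comp hgc
    set ρ : ℝ → ℝ := fun t => Complex.normSq (g ((t : ℂ))) with hρdef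
    have hρ' : HasDerivAt ρ (2 * ((starRingEnd ℂ) a * b).re) 1 := by
      simpa [hadef, hg1, smul_eq_mul] using hρ
    have hslope : Tendsto (slope ρ 1) (𝓝[<] (1:ℝ)) (𝓝 (2 * ((starRingEnd ℂ) a * b).re)) := by
      have := hasDerivAt_iff_tendsto_slope.mp hρ'
      exact this.mono_left (nhdsWithin_mono _ (fun x hx => by
        simp only [mem_compl_iff, mem_singleton_iff]
        exact ne_of_lt hx))
    have hev : ∀ᶠ t in 𝓝[<] (1:ℝ), 0 ≤ slope ρ 1 t := by
      filter_upwards [Ioo_mem_nhdsLT_of_mem (by norm_num : (1:ℝ) ∈ Ioc (0:ℝ) 1)] with t ht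
      have htle : ρ t ≤ ρ 1 := by
        have h1 : ‖((t:ℝ) : ℂ)‖ ≤ 1 := by
          rw [Complex.norm_real, Real.norm_eq_abs, abs_of_pos ht.1]
          exact le_of_lt ht.2
        have h2 : ‖g ((t : ℂ))‖ ≤ ‖w z₀‖ := hgbound _ (by simpa [mem_closedBall_zero_iff] using h1)
        have h3 : Complex.normSq (g ((t:ℂ))) ≤ Complex.normSq (w z₀) := by
          rw [Complex.normSq_eq_norm_sq, Complex.normSq_eq_norm_sq]
          exact pow_le_pow_left₀ (norm_nonneg _) h2 2
        simpa [hρdef, hg1] using h3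
      have heq2 : slope ρ 1 t = (ρ 1 - ρ t) / (1 - t) := by
        rw [slope_def_field, ← neg_sub (ρ 1) (ρ t), ← neg_sub (1:ℝ) t, neg_div_neg_eq]
      rw [heq2]
      exact div_nonneg (by linarith) (by linarith [ht.2])
    have := ge_of_tendsto hslope hev
    linarith
  -- conclude
  set c : ℝ := ((starRingEnd ℂ) a * b).re with hcdef
  have hca : (starRingEnd ℂ) a * b = (c : ℂ) := by
    apply Complex.ext
    · simp [hcdef]
    · simp [him]
  have hna : Complex.normSq a ≠ 0 := (Complex.normSq_pos.mpr hwz₀).ne'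
  have hb : (Complex.normSq a : ℂ) * b = (c : ℂ) * a := by
    calc (Complex.normSq a : ℂ) * b = a * ((starRingEnd ℂ) a * b) := by
          rw [← mul_assoc, Complex.mul_conj]
      _ = a * (c : ℂ) := by rw [hca]
      _ = (c : ℂ) * a := by ring
  refine ⟨1 + c / Complex.normSq a, ?_, ?_⟩
  · have h0 : 0 ≤ c / Complex.normSq a := div_nonneg hre (Complex.normSq_nonneg a)
    linarith
  · have hneC : (Complex.normSq a : ℂ) ≠ 0 := by exact_mod_cast hna
    have hbval : b = ((c : ℂ) / (Complex.normSq a : ℂ)) * a := by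
      field_simp
      linear_combination hb
    have hsum : z₀ * deriv w z₀ = b + a := by rw [hbdef]; ring
    rw [hsum, hbval]
    push_cast
    rw [hadef]
    field_simp
    ring
end

section
/- Let 2 ≤ β < 3 be real and define f(z) = ((β−1)/2)·(1 − (1−z)^{2/(β−1)}) for z ∈ U, where (1−z)^c denotes the principal branch exp(c·Log(1−z)) (well-defined since Re(1−z) > 0 on U). Then f ∈ A, f'(z) = (1−z)^{(3−β)/(β−1)} ≠ 0 on U, 1 + z f''(z)/f'(z) = (β−1−2z)/((β−1)(1−z)) for all z ∈ U, and Re(1 + z f''(z)/f'(z)) < (β+1)/(2(β−1)) for all z ∈ U. -/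
open Complex

lemma example1_re_lt_one {z : ℂ} (hz : ‖z‖ < 1) : z.re < 1 :=
  lt_of_le_of_lt (le_trans (le_abs_self _) (Complex.abs_re_le_norm z)) hz

lemma example1_slit {z : ℂ} (hz : ‖z‖ < 1) : (1 - z) ∈ Complex.slitPlane := by
  rw [Complex.mem_slitPlane_iff]
  left
  simp only [Complex.sub_re, Complex.one_re]
  linarith [example1_re_lt_one hz]

lemma example1_one_sub_ne {z : ℂ} (hz : ‖z‖ < 1) : (1 : ℂ) - z ≠ 0 :=
  Complex.slitPlane_ne_zero (example1_slit hz)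

/-- derivative of `z ↦ (1-z)^c` on the disc -/
lemma example1_hd_cpow (c : ℂ) {z : ℂ} (hz : ‖z‖ < 1) :
    HasDerivAt (fun w => (1 - w) ^ c) (-(c * (1 - z) ^ (c - 1))) z := by
  have h1 : HasDerivAt (fun w : ℂ => 1 - w) (-1) z := by
    simpa using ((hasDerivAt_id z).const_sub 1)
  have := h1.cpow_const (c := c) (example1_slit hz)
  simpa [mul_comm] using this

/-- `Re (1/(1-z)) > 1/2` on the disc. -/
lemma example1_re_inv {z : ℂ} (hz : ‖z‖ < 1) : 1/2 < ((1 : ℂ)/(1 - z)).re := by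
  rw [show ((1:ℂ)/(1-z)) = (1-z)⁻¹ from one_div _, Complex.inv_re]
  have hn : 0 < Complex.normSq (1 - z) :=
    Complex.normSq_pos.mpr (example1_one_sub_ne hz)
  rw [lt_div_iff₀ hn]
  have hzn : Complex.normSq z < 1 := by
    rw [Complex.normSq_eq_norm_sq]
    have : ‖z‖ < 1 := hz
    nlinarith [norm_nonneg z]
  rw [Complex.normSq_apply] at hzn
  simp only [Complex.normSq_apply, Complex.sub_re, Complex.sub_im, Complex.one_re,
    Complex.one_im]
  nlinarith

/-- Example 2.1 (case `2 ≤ β < 3`): the function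
`f z = ((β−1)/2)(1 − (1−z)^{2/(β−1)})` (principal branch) lies in `𝒜`, has
`f' z = (1−z)^{(3−β)/(β−1)} ≠ 0`, satisfies
`1 + z f''/f' = (β−1−2z)/((β−1)(1−z))`, and
`Re(1 + z f''/f') < (β+1)/(2(β−1))` on the unit disc. -/
theorem example1_case1 (β : ℝ) (hβ1 : 2 ≤ β) (hβ2 : β < 3)
    (f : ℂ → ℂ)
    (hfdef : f = fun z => (((β : ℂ) - 1) / 2) * (1 - (1 - z) ^ ((2 : ℂ) / ((β : ℂ) - 1)))) :
    DifferentiableOn ℂ f {z : ℂ | ‖z‖ < 1} ∧ f 0 = 0 ∧ deriv f 0 = 1 ∧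
    (∀ z : ℂ, ‖z‖ < 1 →
      deriv f z = (1 - z) ^ (((3 : ℂ) - (β : ℂ)) / ((β : ℂ) - 1)) ∧ deriv f z ≠ 0) ∧
    (∀ z : ℂ, ‖z‖ < 1 →
      1 + z * deriv (deriv f) z / deriv f z =
        ((β : ℂ) - 1 - 2 * z) / (((β : ℂ) - 1) * (1 - z))) ∧
    (∀ z : ℂ, ‖z‖ < 1 →
      (1 + z * deriv (deriv f) z / deriv f z).re < (β + 1) / (2 * (β - 1))) := by
  have hne : ((β : ℂ) - 1) ≠ 0 := by
    intro h
    have h1 : ((β : ℂ)) = 1 := by linear_combination h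
    have : β = 1 := by exact_mod_cast h1
    linarith
  set a : ℂ := (2 : ℂ) / ((β : ℂ) - 1) with ha
  set b : ℂ := ((3 : ℂ) - (β : ℂ)) / ((β : ℂ) - 1) with hb
  have hab : a - 1 = b := by rw [ha, hb, div_sub_one hne]; ring
  -- first derivative
  have hfd : ∀ z : ℂ, ‖z‖ < 1 → HasDerivAt f ((1 - z) ^ b) z := by
    intro z hz
    have h1 := (example1_hd_cpow a hz).const_sub 1
    have h2 := h1.const_mul (((β : ℂ) - 1) / 2)
    rw [hfdef]
    refine h2.congr_deriv ?_
    have hca : ((β : ℂ) - 1) / 2 * a = 1 := by rw [ha]; field_simp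
    rw [show b = a - 1 from hab.symm]
    linear_combination ((1 - z) ^ (a - 1)) * hca
  have hderiv : ∀ z : ℂ, ‖z‖ < 1 → deriv f z = (1 - z) ^ b := fun z hz =>
    (hfd z hz).deriv
  have hne0 : ∀ z : ℂ, ‖z‖ < 1 → (1 - z) ^ b ≠ 0 := by
    intro z hz h
    rw [Complex.cpow_eq_zero_iff] at h
    exact example1_one_sub_ne hz h.1
  -- second derivative
  have hopen : IsOpen {w : ℂ | ‖w‖ < 1} := isOpen_lt continuous_norm continuous_const
  have hdd : ∀ z : ℂ, ‖z‖ < 1 →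
      deriv (deriv f) z = -(b * (1 - z) ^ (b - 1)) := by
    intro z hz
    have hev : deriv f =ᶠ[nhds z] (fun w => (1 - w) ^ b) := by
      filter_upwards [hopen.mem_nhds hz] with w hw
      exact hderiv w hw
    rw [hev.deriv_eq]
    exact (example1_hd_cpow b hz).deriv
  -- the key rational expression
  have hpre : ∀ z : ℂ, ‖z‖ < 1 →
      1 + z * deriv (deriv f) z / deriv f z =
        ((β : ℂ) - 1 - 2 * z) / (((β : ℂ) - 1) * (1 - z)) := by
    intro z hz
    rw [hderiv z hz, hdd z hz]
    have hc : (1 - z) ^ (b - 1) = (1 - z) ^ b / (1 - z) := by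
      rw [Complex.cpow_sub _ _ (example1_one_sub_ne hz), Complex.cpow_one]
    rw [hc]
    have h1 := example1_one_sub_ne hz
    have h2 := hne0 z hz
    generalize (1 - z) ^ b = X at h2 ⊢
    rw [hb]
    field_simp
    ring
  refine ⟨?_, ?_, ?_, ?_, hpre, ?_⟩
  · intro z hz
    exact (hfd z hz).differentiableAt.differentiableWithinAt
  · simp [hfdef]
  · have h0 : ‖(0 : ℂ)‖ < 1 := by norm_num
    rw [hderiv 0 h0]
    simp
  · intro z hz
    exact ⟨by rw [hderiv z hz, hb], by rw [hderiv z hz]; exact hne0 z hz⟩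
  · intro z hz
    rw [hpre z hz]
    set r : ℝ := ((1 : ℂ)/(1 - z)).re with hr
    have hrgt : 1/2 < r := example1_re_inv hz
    have hkey : ((β : ℂ) - 1 - 2 * z) / (((β : ℂ) - 1) * (1 - z)) =
        ((2/(β-1) : ℝ) : ℂ) + (((β-3)/(β-1) : ℝ) : ℂ) * ((1 : ℂ)/(1 - z)) := by
      have h1 := example1_one_sub_ne hz
      push_cast
      field_simp
      ring
    rw [hkey]
    have hre : (((2/(β-1) : ℝ) : ℂ) + (((β-3)/(β-1) : ℝ) : ℂ) * ((1 : ℂ)/(1 - z))).re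
        = 2/(β-1) + ((β-3)/(β-1)) * r := by
      rw [Complex.add_re, Complex.re_ofReal_mul, Complex.ofReal_re, hr]
    rw [hre]
    have hβpos : (0 : ℝ) < β - 1 := by linarith
    have heq : 2/(β-1) + ((β-3)/(β-1)) * r = (2 + (β-3)*r)/(β-1) := by
      field_simp
    rw [heq, div_lt_div_iff₀ hβpos (by linarith : (0:ℝ) < 2*(β-1))]
    nlinarith [mul_pos hβpos (mul_pos (show (0:ℝ) < 3-β by linarith)
      (show (0:ℝ) < r - 1/2 by linarith))]
end

section
/- Let β > 1 be real with β ≠ 1 + √2, and define f(z) = (β(β+1)/(−β²+2β+1))·(1 − (1−z)^{(−β²+2β+1)/(β(β+1))}) for z ∈ U, where (1−z)^c denotes the principal branch exp(c·Log(1−z)) (well-defined since Re(1−z) > 0 on U). Then f ∈ A, f'(z) = (1−z)^{−(2β²−β−1)/(β(β+1))} ≠ 0 on U, 1 + z f''(z)/f'(z) = (β(β+1) + (β²−2β−1)z)/(β(β+1)(1−z)) for all z ∈ U, and Re(1 + z f''(z)/f'(z)) > (3β+1)/(2β(β+1)) for all z ∈ U. -/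
/-- Example 2.2 (case `β > 1`, `β ≠ 1 + √2`): the function
`f z = (β(β+1)/(−β²+2β+1))(1 − (1−z)^{(−β²+2β+1)/(β(β+1))})` (principal branch)
lies in `𝒜`, has `f' z = (1−z)^{−(2β²−β−1)/(β(β+1))} ≠ 0`, satisfies
`1 + z f''/f' = (β(β+1) + (β²−2β−1)z)/(β(β+1)(1−z))`, and
`Re(1 + z f''/f') > (3β+1)/(2β(β+1))` on the unit disc. -/
theorem example2_case1 (β : ℝ) (hβ : 1 < β) (hβ' : β ≠ 1 + Real.sqrt 2)
    (f : ℂ → ℂ)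
    (hfdef : f = fun z => ((β : ℂ) * ((β : ℂ) + 1) / (-(β : ℂ) ^ 2 + 2 * (β : ℂ) + 1)) *
      (1 - (1 - z) ^ ((-(β : ℂ) ^ 2 + 2 * (β : ℂ) + 1) / ((β : ℂ) * ((β : ℂ) + 1))))) :
    DifferentiableOn ℂ f {z : ℂ | ‖z‖ < 1} ∧ f 0 = 0 ∧ deriv f 0 = 1 ∧
    (∀ z : ℂ, ‖z‖ < 1 →
      deriv f z = (1 - z) ^ (-((2 * (β : ℂ) ^ 2 - (β : ℂ) - 1) / ((β : ℂ) * ((β : ℂ) + 1)))) ∧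
      deriv f z ≠ 0) ∧
    (∀ z : ℂ, ‖z‖ < 1 →
      1 + z * deriv (deriv f) z / deriv f z =
        ((β : ℂ) * ((β : ℂ) + 1) + ((β : ℂ) ^ 2 - 2 * (β : ℂ) - 1) * z) /
          ((β : ℂ) * ((β : ℂ) + 1) * (1 - z))) ∧
    (∀ z : ℂ, ‖z‖ < 1 →
      (3 * β + 1) / (2 * β * (β + 1)) < (1 + z * deriv (deriv f) z / deriv f z).re) := by
  subst hfdef
  have hβ0 : (0:ℝ) < β := by linarith
  have hden : β * (β + 1) ≠ 0 := by positivity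
  have hnumR : -β ^ 2 + 2 * β + 1 ≠ 0 := by
    intro h
    have h2 : (β - 1) ^ 2 = 2 := by nlinarith
    have h3 : β - 1 = Real.sqrt 2 := by
      rw [← Real.sqrt_sq (by linarith : (0:ℝ) ≤ β - 1), h2]
    exact hβ' (by linarith)
  have hdenC : (β:ℂ) * ((β:ℂ) + 1) ≠ 0 := fun h => hden (by exact_mod_cast h)
  have hnumC : (-(β:ℂ) ^ 2 + 2 * (β:ℂ) + 1) ≠ 0 := fun h => hnumR (by exact_mod_cast h)
  have hβC : (β:ℂ) ≠ 0 := by exact_mod_cast hβ0.ne'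
  have hβ1C : (β:ℂ) + 1 ≠ 0 := by exact_mod_cast (by linarith : β + 1 ≠ 0)
  set c : ℂ := (-(β : ℂ) ^ 2 + 2 * (β : ℂ) + 1) / ((β : ℂ) * ((β : ℂ) + 1)) with hc
  set K : ℂ := (β : ℂ) * ((β : ℂ) + 1) / (-(β : ℂ) ^ 2 + 2 * (β : ℂ) + 1) with hK
  set f : ℂ → ℂ := fun z => K * (1 - (1 - z) ^ c) with hf
  have hKc : K * c = 1 := by
    rw [hK, hc, div_mul_div_comm, mul_comm (-(β:ℂ) ^ 2 + 2 * (β:ℂ) + 1), div_self (mul_ne_zero hdenC hnumC)]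
  -- basic facts for z in the disc
  have hre : ∀ z : ℂ, ‖z‖ < 1 → 0 < (1 - z).re := by
    intro z hz
    have h1 : |z.re| ≤ ‖z‖ := by exact Complex.abs_re_le_norm z
    have : |z.re| < 1 := lt_of_le_of_lt h1 hz
    have := abs_lt.mp this
    simp only [Complex.sub_re, Complex.one_re]
    linarith [this.2]
  have hz1 : ∀ z : ℂ, ‖z‖ < 1 → (1:ℂ) - z ≠ 0 := by
    intro z hz h
    have : (1:ℂ) = z := by linear_combination h
    rw [← this] at hz
    simp at hz
  -- first derivative
  have key : ∀ z : ℂ, ‖z‖ < 1 → HasDerivAt f ((1 - z) ^ (c - 1)) z := by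
    intro z hz
    have h1 : HasDerivAt (fun w : ℂ => 1 - w) (-1) z := (hasDerivAt_id z).const_sub 1
    have h2 : HasDerivAt (fun w : ℂ => (1 - w) ^ c) (c * (1 - z) ^ (c - 1) * (-1)) z :=
      h1.cpow_const (Complex.mem_slitPlane_iff.mpr (Or.inl (hre z hz)))
    have h3 := (h2.const_sub 1).const_mul K
    refine h3.congr_deriv ?_
    have : K * c = 1 := hKc
    linear_combination ((1 - z) ^ (c - 1) : ℂ) * hKc
  have keyg : ∀ z : ℂ, ‖z‖ < 1 →
      HasDerivAt (fun w : ℂ => (1 - w) ^ (c - 1)) (-((c - 1) * (1 - z) ^ (c - 2))) z := by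
    intro z hz
    have h1 : HasDerivAt (fun w : ℂ => 1 - w) (-1) z := (hasDerivAt_id z).const_sub 1
    have h2 : HasDerivAt (fun w : ℂ => (1 - w) ^ (c - 1))
        ((c - 1) * (1 - z) ^ (c - 1 - 1) * (-1)) z :=
      h1.cpow_const (Complex.mem_slitPlane_iff.mpr (Or.inl (hre z hz)))
    convert h2 using 1
    rw [show c - 1 - 1 = c - 2 by ring]
    ring
  have hSopen : IsOpen {z : ℂ | ‖z‖ < 1} := isOpen_lt continuous_norm continuous_const
  have hdf : ∀ z : ℂ, ‖z‖ < 1 → deriv f z = (1 - z) ^ (c - 1) := fun z hz => (key z hz).deriv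
  have hdf2 : ∀ z : ℂ, ‖z‖ < 1 → deriv (deriv f) z = -((c - 1) * (1 - z) ^ (c - 2)) := by
    intro z hz
    have hev : deriv f =ᶠ[nhds z] fun w => (1 - w) ^ (c - 1) := by
      filter_upwards [hSopen.mem_nhds hz] with w hw
      exact hdf w hw
    rw [hev.deriv_eq]
    exact (keyg z hz).deriv
  have hPne : ∀ z : ℂ, ‖z‖ < 1 → (1 - z) ^ (c - 1) ≠ 0 := by
    intro z hz
    simp [Complex.cpow_eq_zero_iff, hz1 z hz]
  -- part 4 equality
  have part4 : ∀ z : ℂ, ‖z‖ < 1 →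
      1 + z * deriv (deriv f) z / deriv f z =
        ((β : ℂ) * ((β : ℂ) + 1) + ((β : ℂ) ^ 2 - 2 * (β : ℂ) - 1) * z) /
          ((β : ℂ) * ((β : ℂ) + 1) * (1 - z)) := by
    intro z hz
    rw [hdf2 z hz, hdf z hz]
    have hsplit : (1 - z) ^ (c - 2) = (1 - z) ^ (c - 1) / (1 - z) := by
      rw [show c - 2 = (c - 1) - 1 by ring, Complex.cpow_sub _ _ (hz1 z hz), Complex.cpow_one]
    rw [hsplit, hc]
    field_simp [hPne z hz, hz1 z hz, hβC, hβ1C]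
    ring
  refine ⟨fun z hz => (key z hz).differentiableAt.differentiableWithinAt, ?_, ?_, ?_, ?_, ?_⟩
  · rw [hf]; simp [Complex.one_cpow]
  · have h0 : ‖(0:ℂ)‖ < 1 := by simp
    rw [hdf 0 h0]; simp [Complex.one_cpow]
  · intro z hz
    have hexp : c - 1 = -((2 * (β : ℂ) ^ 2 - (β : ℂ) - 1) / ((β : ℂ) * ((β : ℂ) + 1))) := by
      rw [hc]; field_simp [hβC, hβ1C]; ring
    refine ⟨by rw [hdf z hz, hexp], ?_⟩
    rw [hdf z hz]; exact hPne z hz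
  · exact part4
  · intro z hz
    rw [part4 z hz]
    set d : ℝ := (-β ^ 2 + 2 * β + 1) / (β * (β + 1)) with hd
    have hpos : (0:ℝ) < β * (β + 1) := by positivity
    have hsplit2 : ((β : ℂ) * ((β : ℂ) + 1) + ((β : ℂ) ^ 2 - 2 * (β : ℂ) - 1) * z) /
          ((β : ℂ) * ((β : ℂ) + 1) * (1 - z)) = (d:ℂ) + ((1 - d : ℝ):ℂ) * (1 - z)⁻¹ := by
      rw [hd]
      push_cast
      field_simp [hz1 z hz, hβC, hβ1C]
      ring
    rw [hsplit2]
    have hinv : (1:ℝ)/2 < ((1 - z)⁻¹).re := by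
      have hns : 0 < Complex.normSq (1 - z) := Complex.normSq_pos.mpr (hz1 z hz)
      rw [Complex.inv_re, lt_div_iff₀ hns]
      have hz2 : z.re ^ 2 + z.im ^ 2 < 1 := by
        have h : ‖z‖ ^ 2 < 1 := by nlinarith [norm_nonneg z]
        rw [Complex.sq_norm, Complex.normSq_apply] at h
        nlinarith
      simp only [Complex.normSq_apply, Complex.sub_re, Complex.sub_im, Complex.one_re,
        Complex.one_im]
      nlinarith
    have h1d : 0 < 1 - d := by
      have : d < 1 := by rw [hd, div_lt_one hpos]; nlinarith
      linarith
    have htarget : (3 * β + 1) / (2 * β * (β + 1)) = (1 + d) / 2 := by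
      rw [hd]; field_simp; ring
    have hre' : ((d:ℂ) + ((1 - d : ℝ):ℂ) * (1 - z)⁻¹).re = d + (1 - d) * ((1 - z)⁻¹).re := by
      simp [Complex.add_re, Complex.re_ofReal_mul]
    rw [hre', htarget]
    nlinarith [mul_lt_mul_of_pos_left hinv h1d]
end

section
/- Let β ≤ −1 be real and define f(z) = (−β(β−1)/(β²+1))·(1 − (1−z)^{−(β²+1)/(β(β−1))}) for z ∈ U, where (1−z)^c denotes the principal branch exp(c·Log(1−z)) (well-defined since Re(1−z) > 0 on U). Then f ∈ A, f'(z) = (1−z)^{−(2β²−β+1)/(β(β−1))} ≠ 0 on U, 1 + z f''(z)/f'(z) = (β(β−1) + (β²+1)z)/(β(β−1)(1−z)) for all z ∈ U, and Re(1 + z f''(z)/f'(z)) > −(β+1)/(2β(β−1)) for all z ∈ U. -/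
open Complex

lemma re_bound_aux (a b : ℝ) (ha : 0 < a) (hb : 0 < b) (z : ℂ) (hz : ‖z‖ < 1) :
    (a - b) / (2 * a) < (((a : ℂ) + (b : ℂ) * z) / ((a : ℂ) * (1 - z))).re := by
  have habs : z.re ^ 2 + z.im ^ 2 < 1 := by
    have h1 : ‖z‖ < 1 := hz
    have h2 : z.re ^ 2 + z.im ^ 2 = ‖z‖ ^ 2 := by
      rw [Complex.sq_norm, Complex.normSq_apply]; ring
    nlinarith [norm_nonneg z]
  have hD : 0 < (1 - z.re) ^ 2 + z.im ^ 2 := by nlinarith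
  rw [Complex.div_re]
  simp only [Complex.add_re, Complex.add_im, Complex.ofReal_re, Complex.ofReal_im,
    Complex.mul_re, Complex.mul_im, Complex.sub_re, Complex.sub_im, Complex.one_re,
    Complex.one_im, Complex.normSq_apply]
  have key : 0 < a ^ 2 * ((a + b) * (1 - z.re ^ 2 - z.im ^ 2)) := by
    have h1 : 0 < a + b := by linarith
    have h2 : 0 < 1 - z.re ^ 2 - z.im ^ 2 := by linarith
    positivity
  rw [← add_div, div_lt_div_iff₀ (by positivity)
    (by nlinarith [mul_pos (mul_pos ha ha) hD])]
  nlinarith [key]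

/-- Example 2.2 (case `β ≤ −1`): the function
`f z = (−β(β−1)/(β²+1))(1 − (1−z)^{−(β²+1)/(β(β−1))})` (principal branch)
lies in `𝒜`, has `f' z = (1−z)^{−(2β²−β+1)/(β(β−1))} ≠ 0`, satisfies
`1 + z f''/f' = (β(β−1) + (β²+1)z)/(β(β−1)(1−z))`, and
`Re(1 + z f''/f') > −(β+1)/(2β(β−1))` on the unit disc. -/
theorem example2_case2 (β : ℝ) (hβ : β ≤ -1)
    (f : ℂ → ℂ)
    (hfdef : f = fun z => (-(β : ℂ) * ((β : ℂ) - 1) / ((β : ℂ) ^ 2 + 1)) *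
      (1 - (1 - z) ^ (-(((β : ℂ) ^ 2 + 1) / ((β : ℂ) * ((β : ℂ) - 1)))))) :
    DifferentiableOn ℂ f {z : ℂ | ‖z‖ < 1} ∧ f 0 = 0 ∧ deriv f 0 = 1 ∧
    (∀ z : ℂ, ‖z‖ < 1 →
      deriv f z = (1 - z) ^ (-((2 * (β : ℂ) ^ 2 - (β : ℂ) + 1) / ((β : ℂ) * ((β : ℂ) - 1)))) ∧
      deriv f z ≠ 0) ∧
    (∀ z : ℂ, ‖z‖ < 1 →
      1 + z * deriv (deriv f) z / deriv f z =
        ((β : ℂ) * ((β : ℂ) - 1) + ((β : ℂ) ^ 2 + 1) * z) /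
          ((β : ℂ) * ((β : ℂ) - 1) * (1 - z))) ∧
    (∀ z : ℂ, ‖z‖ < 1 →
      -(β + 1) / (2 * β * (β - 1)) < (1 + z * deriv (deriv f) z / deriv f z).re) := by
  have hβ0 : (β : ℂ) ≠ 0 := by
    intro h
    have : β = 0 := by exact_mod_cast h
    linarith
  have hβ1 : (β : ℂ) - 1 ≠ 0 := by
    intro h
    have : β = 1 := by exact_mod_cast sub_eq_zero.mp h
    linarith
  have hβ2 : (β : ℂ) ^ 2 + 1 ≠ 0 := by
    intro h
    have : (β : ℝ) ^ 2 + 1 = 0 := by exact_mod_cast h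
    nlinarith
  set c : ℂ := -(((β : ℂ) ^ 2 + 1) / ((β : ℂ) * ((β : ℂ) - 1))) with hc
  set K : ℂ := -(β : ℂ) * ((β : ℂ) - 1) / ((β : ℂ) ^ 2 + 1) with hK
  have hKc : K * c = 1 := by
    rw [hK, hc]; field_simp
  -- basic facts on the disc
  have hslit : ∀ z : ℂ, ‖z‖ < 1 → (1 - z) ∈ Complex.slitPlane := by
    intro z hz
    left
    have : |z.re| < 1 := lt_of_le_of_lt (Complex.abs_re_le_norm z) hz
    simp only [Complex.sub_re, Complex.one_re]
    cases abs_lt.mp this with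
    | intro h1 h2 => linarith
  have h1z : ∀ z : ℂ, ‖z‖ < 1 → (1 : ℂ) - z ≠ 0 := fun z hz =>
    Complex.slitPlane_ne_zero (hslit z hz)
  -- derivative of f
  have hderiv : ∀ z : ℂ, ‖z‖ < 1 → HasDerivAt f ((1 - z) ^ (c - 1)) z := by
    intro z hz
    have hsub : HasDerivAt (fun w : ℂ => 1 - w) (-1) z := by
      exact (hasDerivAt_id' z).const_sub (1 : ℂ)
    have h1 : HasDerivAt (fun w : ℂ => (1 - w) ^ c) (c * (1 - z) ^ (c - 1) * (-1)) z :=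
      hsub.cpow_const (hslit z hz)
    have h2 : HasDerivAt f (K * (0 - c * (1 - z) ^ (c - 1) * (-1))) z := by
      rw [hfdef]
      exact ((hasDerivAt_const z (1 : ℂ)).sub h1).const_mul K
    convert h2 using 1
    have : K * (0 - c * (1 - z) ^ (c - 1) * (-1)) = (K * c) * (1 - z) ^ (c - 1) := by ring
    rw [this, hKc, one_mul]
  have hderiv' : ∀ z : ℂ, ‖z‖ < 1 → deriv f z = (1 - z) ^ (c - 1) := fun z hz =>
    (hderiv z hz).deriv
  have hne : ∀ z : ℂ, ‖z‖ < 1 → (1 - z) ^ (c - 1) ≠ 0 := by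
    intro z hz
    rw [Complex.cpow_def_of_ne_zero (h1z z hz)]
    exact Complex.exp_ne_zero _
  -- second derivative
  have hopen : IsOpen {z : ℂ | ‖z‖ < 1} := isOpen_lt continuous_norm continuous_const
  have hderiv2 : ∀ z : ℂ, ‖z‖ < 1 →
      deriv (deriv f) z = -((c - 1) * (1 - z) ^ (c - 2)) := by
    intro z hz
    have hev : deriv f =ᶠ[nhds z] (fun w => (1 - w) ^ (c - 1)) := by
      filter_upwards [hopen.mem_nhds hz] with w hw
      exact hderiv' w hw
    rw [hev.deriv_eq]
    have hsub : HasDerivAt (fun w : ℂ => 1 - w) (-1) z := by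
      exact (hasDerivAt_id' z).const_sub (1 : ℂ)
    have h1 : HasDerivAt (fun w : ℂ => (1 - w) ^ (c - 1))
        ((c - 1) * (1 - z) ^ (c - 1 - 1) * (-1)) z :=
      hsub.cpow_const (hslit z hz)
    rw [h1.deriv]
    ring_nf
  -- the key rational identity
  have hkey : ∀ z : ℂ, ‖z‖ < 1 →
      1 + z * deriv (deriv f) z / deriv f z =
        ((β : ℂ) * ((β : ℂ) - 1) + ((β : ℂ) ^ 2 + 1) * z) /
          ((β : ℂ) * ((β : ℂ) - 1) * (1 - z)) := by
    intro z hz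
    rw [hderiv2 z hz, hderiv' z hz]
    have hsplit : (1 - z) ^ (c - 1) = (1 - z) ^ (c - 2) * (1 - z) := by
      have : c - 1 = (c - 2) + 1 := by ring
      rw [this, Complex.cpow_add _ _ (h1z z hz), Complex.cpow_one]
    have hP : (1 - z) ^ (c - 2) ≠ 0 := by
      rw [Complex.cpow_def_of_ne_zero (h1z z hz)]
      exact Complex.exp_ne_zero _
    rw [hsplit]
    generalize (1 - z) ^ (c - 2) = P at hP ⊢
    rw [hc]
    field_simp [hP, h1z z hz, hβ0, hβ1]
    ring
  refine ⟨fun z hz => (hderiv z hz).differentiableAt.differentiableWithinAt, ?_, ?_, ?_, hkey, ?_⟩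
  · rw [hfdef]
    simp
  · rw [hderiv' 0 (by simp), sub_zero, Complex.one_cpow]
  · intro z hz
    constructor
    · rw [hderiv' z hz]
      congr 1
      rw [hc]
      field_simp
      ring
    · rw [hderiv' z hz]
      exact hne z hz
  · intro z hz
    rw [hkey z hz]
    have hcast : ((β : ℂ) * ((β : ℂ) - 1) + ((β : ℂ) ^ 2 + 1) * z) /
          ((β : ℂ) * ((β : ℂ) - 1) * (1 - z)) =
        (((β * (β - 1) : ℝ) : ℂ) + ((β ^ 2 + 1 : ℝ) : ℂ) * z) /
          (((β * (β - 1) : ℝ) : ℂ) * (1 - z)) := by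
      push_cast
      ring_nf
    rw [hcast]
    have ha : 0 < β * (β - 1) := by nlinarith
    have hb : 0 < β ^ 2 + 1 := by nlinarith
    have := re_bound_aux (β * (β - 1)) (β ^ 2 + 1) ha hb z hz
    have heq : -(β + 1) / (2 * β * (β - 1)) = (β * (β - 1) - (β ^ 2 + 1)) / (2 * (β * (β - 1))) := by
      rw [div_eq_div_iff (by nlinarith) (by nlinarith)]
      ring
    rw [heq]
    exact this
end
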